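/- Let k, q ∈ ℕ, let H be a k-labeled graph, and let i, a, b, a_1, …, a_q ∈ Fin k with a ≠ b, a ∈ {a_1, …, a_q, i} and b ∉ {a_1, …, a_q, i}. Assume no operator occurrence on the left-hand side is useless. Then θ_i(ρ_{a_1→i}(⋯ ρ_{a_q→i}(η_{a,b}(H)) ⋯)) = η_{i,b}(θ_i(ρ_{a_1→i}(⋯ ρ_{a_q→i}(H) ⋯))) as k-labeled graphs, up to label-preserving isomorphism. -/

import Mathlib

/-! ### `k`-labeled graphs and the basic operations on them -/

/-- A `k`-labeled graph: a simple graph together with a labeling of its vertices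
by labels from `Fin k`. -/
structure LGraph (k : ℕ) where
  V : Type
  G : SimpleGraph V
  lab : V → Fin k

namespace LGraph

variable {k : ℕ}

/-- The join operation `η_{a,b}`: add all edges between vertices of label `a`
and vertices of label `b`. -/
def join (a b : Fin k) (H : LGraph k) : LGraph k where
  V := H.V
  G :=
    { Adj := fun u v =>
        H.G.Adj u v ∨ (u ≠ v ∧ ((H.lab u = a ∧ H.lab v = b) ∨ (H.lab u = b ∧ H.lab v = a)))
      symm := by
        refine ⟨?_⟩
        intro u v h
        rcases h with h | ⟨hne, h⟩
        · exact Or.inl (H.G.adj_symm h)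
        · refine Or.inr ⟨hne.symm, ?_⟩
          rcases h with ⟨h1, h2⟩ | ⟨h1, h2⟩
          · exact Or.inr ⟨h2, h1⟩
          · exact Or.inl ⟨h2, h1⟩
      loopless := by
        refine ⟨?_⟩
        intro v h
        rcases h with h | ⟨hne, _⟩
        · exact H.G.irrefl h
        · exact hne rfl }
  lab := H.lab

/-- The relabel operation `ρ_{a→b}`: every vertex of label `a` gets label `b` instead. -/
def relabel (a b : Fin k) (H : LGraph k) : LGraph k where
  V := H.V
  G := H.G
  lab := fun v => if H.lab v = a then b else H.lab v

/-- The fuse operation `θ_i`: replace all vertices of label `i` by a single new vertex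
(represented by `none`) of label `i` whose neighbourhood is the union of their
neighbourhoods. -/
def fuse (i : Fin k) (H : LGraph k) : LGraph k where
  V := Option {v : H.V // H.lab v ≠ i}
  G :=
    { Adj := fun x y =>
        match x, y with
        | some u, some v => H.G.Adj u.1 v.1
        | some u, none => ∃ w, H.lab w = i ∧ H.G.Adj u.1 w
        | none, some v => ∃ w, H.lab w = i ∧ H.G.Adj w v.1
        | none, none => False
      symm := by
        refine ⟨?_⟩
        rintro (_ | u) (_ | v) h
        · exact h
        · obtain ⟨w, hw, ha⟩ := h
          exact ⟨w, hw, ha.symm⟩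
        · obtain ⟨w, hw, ha⟩ := h
          exact ⟨w, hw, ha.symm⟩
        · exact H.G.adj_symm h
      loopless := by
        refine ⟨?_⟩
        rintro (_ | v) h
        · exact h
        · exact H.G.irrefl h }
  lab := fun x =>
    match x with
    | some u => H.lab u.1
    | none => i

/-- Disjoint union `H1 ⊕ H2` of two `k`-labeled graphs. -/
def union (H1 H2 : LGraph k) : LGraph k where
  V := H1.V ⊕ H2.V
  G := H1.G ⊕g H2.G
  lab := Sum.elim H1.lab H2.lab

/-- Label-preserving isomorphism of `k`-labeled graphs. -/
def LIso (H1 H2 : LGraph k) : Prop :=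
  ∃ e : H1.G ≃g H2.G, ∀ v, H2.lab (e v) = H1.lab v

/-- The occurrence of the join operator `η_{a,b}` applied to `H` is not useless,
i.e. it creates at least one new edge. -/
def joinUseful (a b : Fin k) (H : LGraph k) : Prop :=
  ∃ u v : H.V, u ≠ v ∧ H.lab u = a ∧ H.lab v = b ∧ ¬ H.G.Adj u v

/-- The occurrence of the fuse operator `θ_i` applied to `H` is not useless,
i.e. `H` has at least two vertices of label `i`. -/
def fuseUseful (i : Fin k) (H : LGraph k) : Prop :=
  ∃ u v : H.V, u ≠ v ∧ H.lab u = i ∧ H.lab v = i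

/-- The occurrence of a relabel operator `ρ_{a→b}` applied to `H` is not useless,
i.e. `H` has a vertex of label `a`. -/
def relabelUseful (a : Fin k) (H : LGraph k) : Prop :=
  ∃ v : H.V, H.lab v = a

/-- `relabelSeq i [a₁, …, a_q] H = ρ_{a₁→i}(⋯(ρ_{a_q→i}(H))⋯)`. -/
def relabelSeq (i : Fin k) : List (Fin k) → LGraph k → LGraph k
  | [], H => H
  | a :: as, H => relabel a i (relabelSeq i as H)

/-- None of the relabel operators in `relabelSeq i as H` is useless (this includes
that none of them has the form `ρ_{a→a}`). -/
def relabelSeqUseful (i : Fin k) : List (Fin k) → LGraph k → Prop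
  | [], _ => True
  | a :: as, H => relabelSeqUseful i as H ∧ a ≠ i ∧ relabelUseful a (relabelSeq i as H)

end LGraph

open LGraph

/-! Relabelling changes neither vertices nor edges, so `relabelSeq i as` is the single label map
`c ↦ if c ∈ as then i else c`, which sends `a` to `i` and nothing but `b` to `b`. Hence every
edge added by `η_{a,b}` has an end of label `i` and is absorbed into the fused vertex, which, as
`H` has a vertex of label `a`, thereby becomes adjacent to exactly the vertices of label `b`:
these are the edges added by `η_{i,b}` after fusing. -/

namespace LGraph

variable {k : ℕ}

def map (f : Fin k → Fin k) (H : LGraph k) : LGraph k := ⟨H.V, H.G, f ∘ H.lab⟩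

theorem LIso.refl (H : LGraph k) : LIso H H := ⟨SimpleGraph.Iso.refl, fun _ => rfl⟩

theorem map_id (H : LGraph k) : map id H = H := rfl

theorem map_map (f g : Fin k → Fin k) (H : LGraph k) : map g (map f H) = map (g ∘ f) H := rfl

theorem relabel_eq_map (a b : Fin k) (H : LGraph k) :
    relabel a b H = map (fun c => if c = a then b else c) H := rfl

theorem relabelSeq_eq_map (i : Fin k) (as : List (Fin k)) (H : LGraph k) :
    relabelSeq i as H = map (fun c => if c ∈ as then i else c) H := by
  induction as with
  | nil =>
    refine (map_id H).symm.trans (congrArg (map · H) (funext fun c => ?_))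
    simp
  | cons a as ih =>
    rw [relabelSeq, ih, relabel_eq_map, map_map]
    congr 1
    funext c
    by_cases hc : c ∈ as <;> simp [hc]

theorem fuse_map_join_adj {f : Fin k → Fin k} {i a b : Fin k} {H : LGraph k} (hfa : f a = i)
    (hfb : ∀ c, f c = b ↔ c = b) (ha : ∃ v, H.lab v = a)
    (x y : Option {v : H.V // f (H.lab v) ≠ i}) :
    (fuse i (map f (join a b H))).G.Adj x y ↔ (join i b (fuse i (map f H))).G.Adj x y := by
  have lab_ne {v : H.V} (hv : f (H.lab v) ≠ i) : H.lab v ≠ a := fun h => hv (h ▸ hfa)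
  have hnone : ∀ v : {v : H.V // f (H.lab v) ≠ i},
      (fuse i (map f (join a b H))).G.Adj none (some v) ↔
        (join i b (fuse i (map f H))).G.Adj none (some v) := by
    intro v
    have hv := v.2
    dsimp only [fuse, join, map, Function.comp]
    by_cases hvb : H.lab v = b
    · obtain ⟨w, hw⟩ := ha
      have hwv : w ≠ v.1 := fun h => hv (h ▸ hw ▸ hfa)
      exact iff_of_true ⟨w, hw ▸ hfa, Or.inr ⟨hwv, Or.inl ⟨hw, hvb⟩⟩⟩
        (Or.inr ⟨Option.some_ne_none v ∘ Eq.symm, Or.inl ⟨rfl, (hfb _).2 hvb⟩⟩)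
    · simp [lab_ne hv, hvb, hfb, hv]
  rcases x with _ | u <;> rcases y with _ | v
  · exact iff_of_false (SimpleGraph.irrefl _) (SimpleGraph.irrefl _)
  · exact hnone v
  · exact (SimpleGraph.adj_comm _ _ _).trans ((hnone u).trans (SimpleGraph.adj_comm _ _ _))
  · have hu := u.2
    have hv := v.2
    dsimp only [fuse, join, map, Function.comp]
    simp [hu, hv, lab_ne hu, lab_ne hv]

theorem fuse_map_join {f : Fin k → Fin k} {i a b : Fin k} {H : LGraph k} (hfa : f a = i)
    (hfb : ∀ c, f c = b ↔ c = b) (ha : ∃ v, H.lab v = a) :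
    fuse i (map f (join a b H)) = join i b (fuse i (map f H)) := by
  show LGraph.mk _ _ _ = LGraph.mk _ _ _
  congr 1
  · ext x y
    exact fuse_map_join_adj hfa hfb ha x y
  · funext x
    cases x <;> rfl

end LGraph

theorem fuse_relabelSeq_join_oneSide_general {k : ℕ} (H : LGraph k) (i a b : Fin k)
    (as : List (Fin k))
    (ha : a ∈ as ∨ a = i) (hb : b ∉ as ∧ b ≠ i)
    (hjoin : joinUseful a b H) :
    LIso (fuse i (relabelSeq i as (join a b H)))
         (join i b (fuse i (relabelSeq i as H))) := by
  obtain ⟨u, -, -, hu, -⟩ := hjoin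
  rw [relabelSeq_eq_map, relabelSeq_eq_map, fuse_map_join]
  · exact LIso.refl _
  · split_ifs with h
    exacts [rfl, ha.resolve_left h]
  · intro c
    split_ifs with hc
    exacts [iff_of_false hb.2.symm (fun h => hb.1 (h ▸ hc)), Iff.rfl]
  · exact ⟨u, hu⟩

/-- rule 4: if `a ∈ {a₁, …, a_q, i}` and `b ∉ {a₁, …, a_q, i}`, then
`θ_i(ρ_{a₁→i}(⋯ρ_{a_q→i}(η_{a,b}(H))⋯)) = η_{i,b}(θ_i(ρ_{a₁→i}(⋯ρ_{a_q→i}(H)⋯)))`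
provided that no operator occurrence on the left-hand side is useless. -/
theorem fuse_relabelSeq_join_oneSide {k : ℕ} (H : LGraph k) (i a b : Fin k)
    (as : List (Fin k)) (hab : a ≠ b)
    (ha : a ∈ as ∨ a = i) (hb : b ∉ as ∧ b ≠ i)
    (hjoin : joinUseful a b H)
    (hseq : relabelSeqUseful i as (join a b H))
    (hfuse : fuseUseful i (relabelSeq i as (join a b H))) :
    LIso (fuse i (relabelSeq i as (join a b H)))
         (join i b (fuse i (relabelSeq i as H))) :=
  fuse_relabelSeq_join_oneSide_general H i a b as ha hb hjoin
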